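/- arXiv:2311.06901 — 9 statements merged into one kernel-verified Lean document; each statement's English description precedes it below -/
import Mathlib

section
/- Let I be a nonempty set of non-negative integers and let S be a submonoid of ℕ^(I). Then S is an ideal extension of ℕ^(I) if and only if M(S) + H(S) ⊆ S. -/
open Pointwise

section Defs

variable {M : Type*} [AddCommMonoid M] [PartialOrder M]

/-- `S* = S \ {0}`. -/
def Sstar (S : AddSubmonoid M) : Set M := (S : Set M) \ {0}

/-- The set of gaps `H(S)`, the complement of `S`. -/
def Gaps (S : AddSubmonoid M) : Set M := (S : Set M)ᶜ

/-- The set of atoms `A(S) = S* \ (S* + S*)`. -/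
def Atoms (S : AddSubmonoid M) : Set M := Sstar S \ (Sstar S + Sstar S)

/-- `S` is an ideal extension: `S* + M ⊆ S*`. -/
def IsIdealExtension (S : AddSubmonoid M) : Prop :=
  ∀ s ∈ Sstar S, ∀ x : M, s + x ∈ Sstar S

/-- `S` is gap absorbing. -/
def IsGapAbsorbing (S : AddSubmonoid M) : Prop :=
  Gaps S + Gaps S ⊆ Gaps S ∪ Atoms S ∪ (Atoms S + Atoms S) ∧
  Gaps S + Atoms S ⊆ Atoms S ∪ (Atoms S + Atoms S)

/-- `M(S)`: minimal elements of `S*` with respect to `≤`. -/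
def Mins (S : AddSubmonoid M) : Set M :=
  {m | m ∈ Sstar S ∧ ∀ t ∈ Sstar S, t ≤ m → t = m}

/-- `n`-fold sumset, with `0`-fold sumset `{0}`. -/
def nfold : ℕ → Set M → Set M
  | 0, _ => {0}
  | n + 1, X => nfold n X + X

/-- The set of lengths `L(s) = {n : s ∈ nA(S)}`. -/
def Lset (S : AddSubmonoid M) (s : M) : Set ℕ := {n | s ∈ nfold n (Atoms S)}

/-- The minimal factorization length `ℓ(s)`. -/
noncomputable def minLen (S : AddSubmonoid M) (s : M) : ℕ := sInf (Lset S s)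

/-- `X` is closed under intervals. -/
def ClosedUnderIntervals (X : Set M) : Prop :=
  ∀ u ∈ X, ∀ v ∈ X, u ≤ v → Set.Icc u v ⊆ X

/-- `a ≤_S b`, i.e. `b - a ∈ S`. -/
def dvdS (S : AddSubmonoid M) (a b : M) : Prop := ∃ t ∈ S, a + t = b

end Defs

/-!
If `S` is an ideal extension, then `m + h ∈ S*` for every `m ∈ S*`, in particular for `m ∈ M(S)`.
Conversely, let `s ∈ S*` and `x` be arbitrary. By well-foundedness some `m ∈ M(S)` lies below `s`,
so `s + x = m + (d + x)` with `d = s - m`. If `d + x ∈ S` then `s + x ∈ S` because `m ∈ S`;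
otherwise `d + x` is a gap and `s + x ∈ M(S) + H(S) ⊆ S`. Finally `s + x ≠ 0` since `s ≠ 0`
and the order is canonical.
-/

section IdealExtension

variable {M : Type*} [AddCommMonoid M] [PartialOrder M] {S : AddSubmonoid M}

theorem mem_mins_iff_minimal {m : M} : m ∈ Mins S ↔ Minimal (· ∈ Sstar S) m := by
  rw [minimal_iff]
  exact and_congr_right fun _ => forall₂_congr fun _ _ => imp_congr_right fun _ => eq_comm

theorem exists_mem_mins_le [WellFoundedLT M] {s : M} (hs : s ∈ Sstar S) :
    ∃ m ∈ Mins S, m ≤ s := by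
  obtain ⟨m, hms, hm⟩ := exists_minimal_le_of_wellFoundedLT (· ∈ Sstar S) s hs
  exact ⟨m, mem_mins_iff_minimal.2 hm, hms⟩

theorem add_mem_sstar_of_mem [CanonicallyOrderedAdd M] {s x : M} (hs : s ∈ Sstar S)
    (hsx : s + x ∈ S) : s + x ∈ Sstar S :=
  ⟨hsx, fun h0 => hs.2 (add_eq_zero.1 h0).1⟩

theorem IsIdealExtension.mins_add_gaps_subset (hS : IsIdealExtension S) :
    Mins S + Gaps S ⊆ S := by
  rintro _ ⟨m, hm, h, -, rfl⟩
  exact (hS m hm.1 h).1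

theorem isIdealExtension_of_mins_add_gaps_subset [CanonicallyOrderedAdd M] [WellFoundedLT M]
    (hS : Mins S + Gaps S ⊆ S) : IsIdealExtension S := by
  intro s hs x
  obtain ⟨m, hm, hms⟩ := exists_mem_mins_le hs
  obtain ⟨d, rfl⟩ := exists_add_of_le hms
  refine add_mem_sstar_of_mem hs ?_
  rw [add_assoc]
  by_cases hdx : d + x ∈ S
  · exact S.add_mem hm.1.1 hdx
  · exact hS (Set.add_mem_add hm hdx)

theorem isIdealExtension_iff_mins_add_gaps_subset [CanonicallyOrderedAdd M] [WellFoundedLT M] :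
    IsIdealExtension S ↔ Mins S + Gaps S ⊆ S :=
  ⟨IsIdealExtension.mins_add_gaps_subset, isIdealExtension_of_mins_add_gaps_subset⟩

end IdealExtension

theorem statement0_general (I : Set ℕ) (S : AddSubmonoid (↥I →₀ ℕ)) :
    IsIdealExtension S ↔ Mins S + Gaps S ⊆ (S : Set (↥I →₀ ℕ)) :=
  isIdealExtension_iff_mins_add_gaps_subset

theorem statement0 (I : Set ℕ) (hI : I.Nonempty) (S : AddSubmonoid (↥I →₀ ℕ)) :
    IsIdealExtension S ↔ Mins S + Gaps S ⊆ (S : Set (↥I →₀ ℕ)) :=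
  statement0_general I S
end

section
/- Let I be a nonempty set of non-negative integers and let S ⊆ ℕ^(I) be a gap absorbing monoid. Then S is an ideal extension of ℕ^(I). -/
open Pointwise

/-!
If `a` is an atom and `x` a gap, then `x + a` lies in `A(S) ∪ (A(S) + A(S)) ⊆ S`; so atoms
absorb all of `ℕ^(I)` into `S`. A non-atom `s ∈ S*` splits as `u + v` with `u, v ∈ S*` and
`v < s`, and since `<` is well founded on `ℕ^(I)`, induction gives `s + x = u + (v + x) ∈ S`.
Finally `s + x ≠ 0` because `s ≠ 0`.
-/

section GapAbsorbing

variable {M : Type*} [AddCommMonoid M] {S : AddSubmonoid M}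

lemma Atoms.subset_coe : Atoms S ⊆ (S : Set M) := fun _ ha ↦ ha.1.1

lemma Atoms.add_subset_coe : Atoms S + Atoms S ⊆ (S : Set M) := by
  rintro _ ⟨a, ha, b, hb, rfl⟩
  exact S.add_mem ha.1.1 hb.1.1

lemma add_mem_of_mem_atoms (hHA : Gaps S + Atoms S ⊆ Atoms S ∪ (Atoms S + Atoms S))
    {a : M} (ha : a ∈ Atoms S) (x : M) : a + x ∈ S := by
  by_cases hx : x ∈ S
  · exact S.add_mem ha.1.1 hx
  · rw [add_comm]
    rcases hHA ⟨x, hx, a, ha, rfl⟩ with h | h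
    · exact Atoms.subset_coe h
    · exact Atoms.add_subset_coe h

variable [PartialOrder M] [CanonicallyOrderedAdd M] [AddRightStrictMono M] [WellFoundedLT M]

lemma add_mem_of_mem_sstar (hHA : Gaps S + Atoms S ⊆ Atoms S ∪ (Atoms S + Atoms S))
    {s : M} (hs : s ∈ Sstar S) (x : M) : s + x ∈ S := by
  induction s using WellFoundedLT.induction with
  | _ s ih =>
    by_cases hA : s ∈ Atoms S
    · exact add_mem_of_mem_atoms hHA hA x
    obtain ⟨u, hu, v, hv, rfl⟩ : s ∈ Sstar S + Sstar S := by
      by_contra h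
      exact hA ⟨hs, h⟩
    have hvu : v < u + v := lt_add_of_pos_left v (pos_iff_ne_zero.mpr hu.2)
    rw [add_assoc]
    exact S.add_mem hu.1 (ih v hvu hv)

lemma isIdealExtension_of_gaps_add_atoms_subset
    (hHA : Gaps S + Atoms S ⊆ Atoms S ∪ (Atoms S + Atoms S)) : IsIdealExtension S :=
  fun _ hs x ↦ ⟨add_mem_of_mem_sstar hHA hs x, fun h ↦ hs.2 (eq_zero_of_add_right h)⟩

end GapAbsorbing

theorem statement1_general (I : Set ℕ) (S : AddSubmonoid (↥I →₀ ℕ))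
    (hS : IsGapAbsorbing S) : IsIdealExtension S :=
  isIdealExtension_of_gaps_add_atoms_subset hS.2

theorem statement1 (I : Set ℕ) (hI : I.Nonempty) (S : AddSubmonoid (↥I →₀ ℕ))
    (hS : IsGapAbsorbing S) : IsIdealExtension S :=
  statement1_general I S hS
end

section
/- Let I be a nonempty set of non-negative integers, let ∅ ≠ J ⊆ I, and for each j ∈ J let k_j be a positive integer. Then the submonoid S = {0} ∪ ({k_j·e_j : j ∈ J} + ℕ^(I)) of ℕ^(I) is gap absorbing. -/
open Pointwise

/-!
A nonzero `x` lies in `S` iff `k_j ≤ x_j` for some `j ∈ J`, and it is an atom iff there is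
exactly one such `j` and moreover `x_j < 2 k_j`. A sum of two gaps, or of a gap and an atom, has
all `J`-coordinates below `2 k_j`, except possibly the atom's own coordinate, which stays below
`3 k_j`. Such a sum is a gap or an atom unless it has two large coordinates or one coordinate in
`[2 k_j, 3 k_j)`; in the first case it becomes a sum of two atoms by moving a whole coordinate from
one summand to the other, in the second by splitting off `k_j e_j`.
-/

open Finsupp

section Threshold

variable {ι : Type*}

def thresholdSubmonoid (T : Set ι) (k : ι → ℕ) : AddSubmonoid (ι →₀ ℕ) where
  carrier := {x | x = 0 ∨ ∃ i ∈ T, k i ≤ x i}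
  zero_mem' := Or.inl rfl
  add_mem' := by
    rintro x y (rfl | ⟨i, hi, hx⟩) hy
    · simpa using hy
    · exact Or.inr ⟨i, hi, hx.trans (by simp)⟩

def IsAtomAt (T : Set ι) (k : ι → ℕ) (x : ι →₀ ℕ) (i : ι) : Prop :=
  i ∈ T ∧ k i ≤ x i ∧ x i < 2 * k i ∧ ∀ j ∈ T, j ≠ i → x j < k j

variable {T : Set ι} {k : ι → ℕ}

theorem coe_thresholdSubmonoid :
    (thresholdSubmonoid T k : Set (ι →₀ ℕ)) =
      {0} ∪ ((fun i => single i (k i)) '' T + Set.univ) := by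
  ext x
  simp only [thresholdSubmonoid, AddSubmonoid.coe_set_mk, AddSubsemigroup.coe_set_mk,
    Set.mem_ofPred_eq, Set.mem_union, Set.mem_singleton_iff, Set.mem_add, Set.mem_image,
    Set.mem_univ, true_and]
  refine or_congr_right ⟨fun ⟨i, hi, hx⟩ => ?_, ?_⟩
  · exact ⟨_, ⟨i, hi, rfl⟩, x - single i (k i), add_tsub_cancel_of_le (single_le_iff.2 hx)⟩
  · rintro ⟨_, ⟨i, hi, rfl⟩, y, rfl⟩
    exact ⟨i, hi, by simp⟩

theorem mem_gaps_thresholdSubmonoid {x : ι →₀ ℕ} :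
    x ∈ Gaps (thresholdSubmonoid T k) ↔ x ≠ 0 ∧ ∀ i ∈ T, x i < k i := by
  simp [Gaps, thresholdSubmonoid]

theorem mem_sstar_thresholdSubmonoid (hk : ∀ i ∈ T, 0 < k i) {x : ι →₀ ℕ} :
    x ∈ Sstar (thresholdSubmonoid T k) ↔ ∃ i ∈ T, k i ≤ x i := by
  simp only [Sstar, Set.mem_sdiff, SetLike.mem_coe, Set.mem_singleton_iff]
  constructor
  · rintro ⟨(rfl | h), h0⟩
    exacts [absurd rfl h0, h]
  · rintro ⟨i, hi, hx⟩
    refine ⟨Or.inr ⟨i, hi, hx⟩, ?_⟩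
    rintro rfl
    exact (hk i hi).not_ge hx

theorem IsAtomAt.mem_atoms (hk : ∀ i ∈ T, 0 < k i) {x : ι →₀ ℕ} {i : ι}
    (hx : IsAtomAt T k x i) : x ∈ Atoms (thresholdSubmonoid T k) := by
  obtain ⟨hi, hlo, hhi, hsmall⟩ := hx
  have large_at_i {y : ι →₀ ℕ} (hy : y ≤ x) :
      y ∈ Sstar (thresholdSubmonoid T k) → k i ≤ y i := by
    rw [mem_sstar_thresholdSubmonoid hk]
    rintro ⟨j, hj, hyj⟩
    obtain rfl | hji := eq_or_ne j i
    · exact hyj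
    · exact absurd (hsmall j hj hji) (hyj.trans (hy j)).not_gt
  refine ⟨(mem_sstar_thresholdSubmonoid hk).2 ⟨i, hi, hlo⟩, ?_⟩
  intro hdecomp
  obtain ⟨u, hu, v, hv, rfl⟩ := Set.mem_add.1 hdecomp
  have hu_i := large_at_i le_self_add hu
  have hv_i := large_at_i le_add_self hv
  rw [Finsupp.add_apply] at hhi
  omega

theorem exists_isAtomAt_of_mem_atoms (hk : ∀ i ∈ T, 0 < k i) {x : ι →₀ ℕ}
    (hx : x ∈ Atoms (thresholdSubmonoid T k)) : ∃ i, IsAtomAt T k x i := by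
  obtain ⟨hxS, hxA⟩ := hx
  obtain ⟨i, hi, hxi⟩ := (mem_sstar_thresholdSubmonoid hk).1 hxS
  refine ⟨i, hi, hxi, ?_⟩
  by_contra hlarge
  refine hxA ⟨single i (k i), (mem_sstar_thresholdSubmonoid hk).2 ⟨i, hi, by simp⟩,
    x - single i (k i), (mem_sstar_thresholdSubmonoid hk).2 ?_,
    add_tsub_cancel_of_le (single_le_iff.2 hxi)⟩
  simp only [not_and_or, not_lt, not_forall, exists_prop] at hlarge
  rcases hlarge with h | ⟨j, hj, hji, hxj⟩
  · exact ⟨i, hi, by rw [tsub_apply, single_eq_same]; omega⟩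
  · exact ⟨j, hj, by rwa [tsub_apply, single_eq_of_ne hji, Nat.sub_zero]⟩

theorem isAtomAt_single (hk : ∀ i ∈ T, 0 < k i) {i : ι} (hi : i ∈ T) :
    IsAtomAt T k (single i (k i)) i := by
  refine ⟨hi, by simp, by rw [single_eq_same]; linarith [hk i hi], fun j hj hji => ?_⟩
  simpa [single_eq_of_ne hji] using hk j hj

theorem IsAtomAt.add_mem_atoms_add_atoms (hk : ∀ i ∈ T, 0 < k i) {p q : ι →₀ ℕ} {i i' : ι}
    (hp : IsAtomAt T k p i) (hq : ∀ j ∈ T, q j < k j) (hi' : i' ∈ T) (hi'i : i' ≠ i)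
    (hlarge : k i' ≤ (p + q) i') :
    p + q ∈ Atoms (thresholdSubmonoid T k) + Atoms (thresholdSubmonoid T k) := by
  obtain ⟨hi, hlo, hhi, hsmall⟩ := hp
  have hpi' := hsmall i' hi' hi'i
  have hqi' := hq i' hi'
  rw [Finsupp.add_apply] at hlarge
  refine ⟨p.erase i', ?_, q + single i' (p i'), ?_, ?_⟩
  · refine IsAtomAt.mem_atoms hk ⟨hi, ?_, ?_, fun j hj hji => ?_⟩
    · rwa [erase_ne hi'i.symm]
    · rwa [erase_ne hi'i.symm]
    · obtain rfl | hji' := eq_or_ne j i'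
      · simpa using hk j hj
      · simpa [erase_ne hji'] using hsmall j hj hji
  · refine IsAtomAt.mem_atoms hk ⟨hi', ?_, ?_, fun j hj hji => ?_⟩
    all_goals simp only [Finsupp.add_apply, single_eq_same]
    · omega
    · omega
    · simpa [single_eq_of_ne hji] using hq j hj
  · ext j
    obtain rfl | hji' := eq_or_ne j i'
    · simp only [Finsupp.add_apply, erase_same, single_eq_same]
      omega
    · simp [erase_ne hji', single_eq_of_ne hji']

theorem gaps_add_gaps_subset (hk : ∀ i ∈ T, 0 < k i) :
    Gaps (thresholdSubmonoid T k) + Gaps (thresholdSubmonoid T k) ⊆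
      Gaps (thresholdSubmonoid T k) ∪ Atoms (thresholdSubmonoid T k) ∪
        (Atoms (thresholdSubmonoid T k) + Atoms (thresholdSubmonoid T k)) := by
  intro x hx
  obtain ⟨h₁, hh₁, h₂, hh₂, rfl⟩ := Set.mem_add.1 hx
  rw [mem_gaps_thresholdSubmonoid] at hh₁ hh₂
  have hsum_lt (j : ι) (hj : j ∈ T) : (h₁ + h₂) j < 2 * k j := by
    have := hh₁.2 j hj
    have := hh₂.2 j hj
    rw [Finsupp.add_apply]
    omega
  by_cases hlarge : ∃ i ∈ T, k i ≤ (h₁ + h₂) i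
  · obtain ⟨i, hi, hxi⟩ := hlarge
    by_cases hlarge' : ∃ i' ∈ T, i' ≠ i ∧ k i' ≤ (h₁ + h₂) i'
    · obtain ⟨i', hi', hi'i, hxi'⟩ := hlarge'
      have hp : IsAtomAt T k (h₁ + single i (h₂ i)) i := by
        refine ⟨hi, by simpa using hxi, by simpa using hsum_lt i hi, fun j hj hji => ?_⟩
        simpa [single_eq_of_ne hji] using hh₁.2 j hj
      have hq : ∀ j ∈ T, h₂.erase i j < k j := fun j hj => by
        obtain rfl | hji := eq_or_ne j i
        exacts [by simpa using hk j hj, by simpa [erase_ne hji] using hh₂.2 j hj]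
      have hsplit : h₁ + h₂ = h₁ + single i (h₂ i) + h₂.erase i := by
        rw [add_assoc, single_add_erase]
      rw [hsplit] at hxi' ⊢
      exact Or.inr (hp.add_mem_atoms_add_atoms hk hq hi' hi'i hxi')
    · push Not at hlarge'
      exact Or.inl (Or.inr (IsAtomAt.mem_atoms hk ⟨hi, hxi, hsum_lt i hi, hlarge'⟩))
  · push Not at hlarge
    refine Or.inl (Or.inl (mem_gaps_thresholdSubmonoid.2 ⟨?_, hlarge⟩))
    exact fun h => hh₁.1 (add_eq_zero.1 h).1

theorem gaps_add_atoms_subset (hk : ∀ i ∈ T, 0 < k i) :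
    Gaps (thresholdSubmonoid T k) + Atoms (thresholdSubmonoid T k) ⊆
      Atoms (thresholdSubmonoid T k) ∪
        (Atoms (thresholdSubmonoid T k) + Atoms (thresholdSubmonoid T k)) := by
  intro x hx
  obtain ⟨h, hh, a, ha, rfl⟩ := Set.mem_add.1 hx
  rw [mem_gaps_thresholdSubmonoid] at hh
  obtain ⟨i, ha⟩ := exists_isAtomAt_of_mem_atoms hk ha
  by_cases hlarge' : ∃ i' ∈ T, i' ≠ i ∧ k i' ≤ (h + a) i'
  · obtain ⟨i', hi', hi'i, hxi'⟩ := hlarge'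
    rw [add_comm h a] at hxi' ⊢
    exact Or.inr (ha.add_mem_atoms_add_atoms hk hh.2 hi' hi'i hxi')
  push Not at hlarge'
  obtain ⟨hi, hai, hai', -⟩ := ha
  have hhi := hh.2 i hi
  by_cases hxi : (h + a) i < 2 * k i
  · refine Or.inl (IsAtomAt.mem_atoms hk ⟨hi, ?_, hxi, hlarge'⟩)
    rw [Finsupp.add_apply]
    omega
  · rw [Finsupp.add_apply] at hxi
    have hle : single i (k i) ≤ h + a := single_le_iff.2 (by rw [Finsupp.add_apply]; omega)
    refine Or.inr ⟨single i (k i), (isAtomAt_single hk hi).mem_atoms hk, h + a - single i (k i),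
      IsAtomAt.mem_atoms hk ⟨hi, ?_, ?_, fun j hj hji => ?_⟩, add_tsub_cancel_of_le hle⟩
    · rw [tsub_apply, Finsupp.add_apply, single_eq_same]
      omega
    · rw [tsub_apply, Finsupp.add_apply, single_eq_same]
      omega
    · simpa [single_eq_of_ne hji] using hlarge' j hj hji

theorem isGapAbsorbing_thresholdSubmonoid (hk : ∀ i ∈ T, 0 < k i) :
    IsGapAbsorbing (thresholdSubmonoid T k) :=
  ⟨gaps_add_gaps_subset hk, gaps_add_atoms_subset hk⟩

end Threshold

theorem statement2_general (I : Set ℕ) (J : Set ℕ)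
    (hJI : J ⊆ I) (k : ℕ → ℕ) (hk : ∀ j ∈ J, 0 < k j)
    (S : AddSubmonoid (↥I →₀ ℕ))
    (hS : (S : Set (↥I →₀ ℕ)) =
      {0} ∪ ({x : ↥I →₀ ℕ | ∃ j, ∃ hj : j ∈ J,
                x = Finsupp.single (⟨j, hJI hj⟩ : ↥I) (k j)} + Set.univ)) :
    IsGapAbsorbing S := by
  have hS' : S = thresholdSubmonoid {i : ↥I | i.1 ∈ J} (fun i => k i) := by
    refine SetLike.coe_injective ?_
    rw [hS, coe_thresholdSubmonoid]
    congr
    ext x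
    simp only [Set.mem_ofPred_eq]
    exact ⟨fun ⟨j, hj, hx⟩ => ⟨⟨j, hJI hj⟩, hj, hx.symm⟩,
      fun ⟨i, hi, hx⟩ => ⟨i.1, hi, hx.symm⟩⟩
  rw [hS']
  exact isGapAbsorbing_thresholdSubmonoid fun i hi => hk i hi

theorem statement2 (I : Set ℕ) (hI : I.Nonempty) (J : Set ℕ) (hJ : J.Nonempty)
    (hJI : J ⊆ I) (k : ℕ → ℕ) (hk : ∀ j ∈ J, 0 < k j)
    (S : AddSubmonoid (↥I →₀ ℕ))
    (hS : (S : Set (↥I →₀ ℕ)) =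
      {0} ∪ ({x : ↥I →₀ ℕ | ∃ j, ∃ hj : j ∈ J,
                x = Finsupp.single (⟨j, hJI hj⟩ : ↥I) (k j)} + Set.univ)) :
    IsGapAbsorbing S :=
  statement2_general I J hJI k hk S hS
end

section
/- Let I be a nonempty set of non-negative integers and let S be an ideal extension of ℕ^(I). Then for every atom a ∈ A(S) and every i ∈ I, a + e_i ∈ A(S) ∪ (A(S) + A(S)). If moreover e_i ∉ M(S), then m + e_i ∈ A(S) for every m ∈ M(S). -/
open Pointwise

/-!
The element `e = e_i` is prime for the order of `ℕ^(I)`: if `e ≤ x + y` then `e ≤ x` or `e ≤ y`.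
So whenever `a + e` is written as a sum, `e` can be cancelled against one summand, and since `S`
is an ideal extension the rest of that summand is absorbed by another summand. An atom plus `e`
therefore has no factorization of length three, and a minimal element plus `e` has none of
length two unless `e` itself lies in `S*`, which for a prime `e` means `e ∈ M(S)`.
-/

theorem IsIdealExtension.add_mem_sstar_add_sstar {M : Type*} [AddCommMonoid M]
    {S : AddSubmonoid M} (hS : IsIdealExtension S) {x : M}
    (hx : x ∈ Sstar S + Sstar S) (y : M) : x + y ∈ Sstar S + Sstar S := by
  obtain ⟨p, hp, q, hq, rfl⟩ := hx
  exact ⟨p, hp, q + y, hS q hq y, (add_assoc p q y).symm⟩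

section Prime

variable {M : Type*} [AddCommMonoid M] [PartialOrder M] [CanonicallyOrderedAdd M] [IsCancelAdd M]

/-- In a canonically ordered monoid `≤` is divisibility, so this is primality; `0` qualifies. -/
def IsAddPrime (e : M) : Prop := ∀ x y : M, e ≤ x + y → e ≤ x ∨ e ≤ y

variable {S : AddSubmonoid M} {e : M}

theorem IsIdealExtension.mem_sstar_add_sstar_of_add_eq (hS : IsIdealExtension S)
    {a y r : M} (hy : y ∈ Sstar S + Sstar S) (her : e ≤ r) (h : a + e = y + r) :
    a ∈ Sstar S + Sstar S := by
  obtain ⟨r', rfl⟩ := exists_add_of_le her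
  have : a + e = y + r' + e := by rw [h]; abel
  rw [add_right_cancel this]
  exact hS.add_mem_sstar_add_sstar hy r'

theorem IsIdealExtension.add_ne_add_add_of_mem_atoms (hS : IsIdealExtension S)
    (he : IsAddPrime e) {a p q r : M} (ha : a ∈ Atoms S)
    (hp : p ∈ Sstar S) (hq : q ∈ Sstar S) (hr : r ∈ Sstar S) : a + e ≠ p + q + r := by
  intro h
  have hle : e ≤ p + q + r := h ▸ le_add_self
  refine ha.2 ?_
  rcases he _ _ hle with hpq | her
  · rcases he _ _ hpq with hep | heq
    · exact hS.mem_sstar_add_sstar_of_add_eq (Set.add_mem_add hq hr) hep (by rw [h]; abel)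
    · exact hS.mem_sstar_add_sstar_of_add_eq (Set.add_mem_add hp hr) heq (by rw [h]; abel)
  · exact hS.mem_sstar_add_sstar_of_add_eq (Set.add_mem_add hp hq) her h

theorem IsIdealExtension.mem_atoms_of_add_eq (hS : IsIdealExtension S) (he : IsAddPrime e)
    {a u v : M} (ha : a ∈ Atoms S) (hu : u ∈ Sstar S) (hv : v ∈ Sstar S)
    (h : a + e = u + v) : u ∈ Atoms S := by
  refine ⟨hu, ?_⟩
  rintro ⟨p, hp, q, hq, rfl⟩
  exact hS.add_ne_add_add_of_mem_atoms he ha hp hq hv h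

theorem IsIdealExtension.add_mem_atoms_or_mem_atoms_add_atoms (hS : IsIdealExtension S)
    (he : IsAddPrime e) {a : M} (ha : a ∈ Atoms S) :
    a + e ∈ Atoms S ∪ (Atoms S + Atoms S) := by
  by_cases hsum : a + e ∈ Sstar S + Sstar S
  · obtain ⟨u, hu, v, hv, huv⟩ := hsum
    refine Or.inr ⟨u, hS.mem_atoms_of_add_eq he ha hu hv huv.symm,
      v, hS.mem_atoms_of_add_eq he ha hv hu (by rw [← huv, add_comm]), huv⟩
  · exact Or.inl ⟨hS a ha.1 e, hsum⟩

theorem IsAddPrime.mem_mins_of_mem_sstar (he : IsAddPrime e) (heS : e ∈ Sstar S) :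
    e ∈ Mins S := by
  refine ⟨heS, fun t ht hte => ?_⟩
  obtain ⟨s, hs⟩ := exists_add_of_le hte
  rcases he t s hs.le with het | hes
  · exact le_antisymm hte het
  · have hse : s = e := le_antisymm (hs ▸ le_add_self) hes
    rw [hse, right_eq_add] at hs
    exact absurd hs ht.2

theorem IsIdealExtension.add_mem_atoms_of_mem_mins (hS : IsIdealExtension S)
    (he : IsAddPrime e) (heS : e ∉ Sstar S) {m : M} (hm : m ∈ Mins S) :
    m + e ∈ Atoms S := by
  -- a factorization `m + e = u + v` with `e ≤ u` forces `v = m` by minimality, hence `u = e`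
  have key : ∀ u v, u ∈ Sstar S → v ∈ Sstar S → e ≤ u → m + e ≠ u + v := by
    rintro u v hu hv heu h
    obtain ⟨u', rfl⟩ := exists_add_of_le heu
    have hm' : m = v + u' := add_right_cancel (b := e) (by rw [h]; abel)
    have hvm : v = m := hm.2 v hv (hm' ▸ le_self_add)
    rw [hvm, left_eq_add] at hm'
    rw [hm', add_zero] at hu
    exact heS hu
  refine ⟨hS m hm.1 e, ?_⟩
  rintro ⟨u, hu, v, hv, huv : u + v = m + e⟩
  rcases he u v (huv ▸ le_add_self) with heu | hev
  · exact key u v hu hv heu huv.symm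
  · exact key v u hv hu hev (by rw [← huv, add_comm])

end Prime

theorem Finsupp.isAddPrime_single_one {ι : Type*} (i : ι) :
    IsAddPrime (Finsupp.single i 1 : ι →₀ ℕ) := by
  intro x y h
  simp only [Finsupp.single_le_iff, Finsupp.add_apply] at h ⊢
  omega

theorem statement4_general (I : Set ℕ) (S : AddSubmonoid (↥I →₀ ℕ))
    (hS : IsIdealExtension S) (i : ↥I) :
    (∀ a ∈ Atoms S, a + Finsupp.single i 1 ∈ Atoms S ∪ (Atoms S + Atoms S)) ∧
    (Finsupp.single i 1 ∉ Mins S →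
      ∀ m ∈ Mins S, m + Finsupp.single i 1 ∈ Atoms S) :=
  have he := Finsupp.isAddPrime_single_one i
  ⟨fun _ ha => hS.add_mem_atoms_or_mem_atoms_add_atoms he ha,
    fun hi _ hm => hS.add_mem_atoms_of_mem_mins he (fun h => hi (he.mem_mins_of_mem_sstar h)) hm⟩

theorem statement4 (I : Set ℕ) (hI : I.Nonempty) (S : AddSubmonoid (↥I →₀ ℕ))
    (hS : IsIdealExtension S) (i : ↥I) :
    (∀ a ∈ Atoms S, a + Finsupp.single i 1 ∈ Atoms S ∪ (Atoms S + Atoms S)) ∧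
    (Finsupp.single i 1 ∉ Mins S →
      ∀ m ∈ Mins S, m + Finsupp.single i 1 ∈ Atoms S) :=
  statement4_general I S hS i
end

section
/- Let I be a nonempty set of non-negative integers, let S ⊆ ℕ^(I) be a gap absorbing monoid, and let n be an integer greater than one. Then for all s ∈ nA(S) and all i ∈ I such that s − e_i ∈ ℕ^(I), one has s − e_i ∈ (n−1)A(S) ∪ nA(S). -/
/-!
Write `s = x + eᵢ` as a sum of `n` atoms. Since `eᵢ` is prime for `≤` in `ℕ^(I)`, it lies below one
of these atoms, say `c + eᵢ`, so that `x` is `c` plus `n - 1` atoms. Gap absorption gives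
`c + a ∈ A ∪ (A + A)` for any atom `a`: if `c` is a gap this is the hypothesis itself, and if `c ∈ S*`
then `c` must already be an atom, because `g + S* ⊆ S*` for every gap `g` (well-founded
induction: an element of `S*` is an atom or a sum of two smaller elements of `S*`). Merging `c` with one of the remaining atoms then yields `n - 1` or `n` atoms.
-/

open Pointwise

section GapAbsorbing

variable {M : Type*} [AddCommMonoid M] [PartialOrder M] [CanonicallyOrderedAdd M]
  {S : AddSubmonoid M}

theorem add_mem_sstar {u v : M} (hu : u ∈ Sstar S) (hv : v ∈ S) : u + v ∈ Sstar S :=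
  ⟨S.add_mem hu.1 hv, fun h => hu.2 (add_eq_zero.mp h).1⟩

theorem atoms_union_add_subset_sstar : Atoms S ∪ (Atoms S + Atoms S) ⊆ Sstar S := by
  rintro _ (ha | ⟨a, ha, b, hb, rfl⟩)
  exacts [ha.1, add_mem_sstar ha.1 hb.1.1]

variable [IsOrderedCancelAddMonoid M]
  (hS : Gaps S + Atoms S ⊆ Atoms S ∪ (Atoms S + Atoms S))
include hS

theorem gap_add_mem_sstar [WellFoundedLT M] {g u : M} (hg : g ∈ Gaps S) (hu : u ∈ Sstar S) :
    g + u ∈ Sstar S := by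
  induction u using WellFoundedLT.induction with
  | _ u ih =>
    by_cases hua : u ∈ Atoms S
    · exact atoms_union_add_subset_sstar (hS (Set.add_mem_add hg hua))
    · obtain ⟨v, hv, w, hw, rfl⟩ : u ∈ Sstar S + Sstar S := not_not.mp fun h => hua ⟨hu, h⟩
      rw [← add_assoc]
      exact add_mem_sstar (ih v (lt_add_of_pos_right v (pos_iff_ne_zero.mpr hw.2)) hv) hw.1

theorem mem_atoms_of_add_mem_atoms [WellFoundedLT M] {b g : M} (hb : b ∈ Sstar S)
    (hbg : b + g ∈ Atoms S) : b ∈ Atoms S := by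
  by_cases hgS : g ∈ S
  · by_cases hg0 : g = 0
    · simpa [hg0] using hbg
    · exact absurd (Set.add_mem_add hb (show g ∈ Sstar S from ⟨hgS, hg0⟩)) hbg.2
  · refine ⟨hb, ?_⟩
    rintro ⟨u, hu, v, hv, rfl⟩
    exact hbg.2 (Set.mem_add.mpr ⟨g + u, gap_add_mem_sstar hS hgS hu, v, hv, by dsimp only; abel⟩)

theorem add_mem_atoms_union_of_add_mem_atoms [WellFoundedLT M] {b g a : M}
    (hbg : b + g ∈ Atoms S) (ha : a ∈ Atoms S) : b + a ∈ Atoms S ∪ (Atoms S + Atoms S) := by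
  by_cases hbS : b ∈ S
  · by_cases hb0 : b = 0
    · simpa [hb0] using Or.inl ha
    · exact Or.inr (Set.add_mem_add (mem_atoms_of_add_mem_atoms hS ⟨hbS, hb0⟩ hbg) ha)
  · exact hS (Set.add_mem_add hbS ha)

end GapAbsorbing

section Nfold

variable {M : Type*} [AddCommMonoid M] [PartialOrder M] [CanonicallyOrderedAdd M] [IsCancelAdd M]

theorem exists_eq_add_of_add_mem_nfold_succ {X : Set M} {e : M}
    (he : ∀ u v : M, e ≤ u + v → e ≤ u ∨ e ≤ v) (n : ℕ) (x : M)
    (hx : x + e ∈ nfold (n + 1) X) : ∃ y ∈ nfold n X, ∃ c, c + e ∈ X ∧ x = y + c := by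
  induction n generalizing x with
  | zero =>
    obtain ⟨z, rfl, a, ha, hsum⟩ := Set.mem_add.mp hx
    exact ⟨0, rfl, x, by rwa [← hsum, zero_add], (zero_add x).symm⟩
  | succ n ih =>
    obtain ⟨p, hp, a, ha, hsum⟩ := Set.mem_add.mp hx
    rcases he p a (hsum ▸ le_add_self) with hep | hea
    · obtain ⟨p', rfl⟩ := exists_add_of_le hep
      obtain ⟨y, hy, c, hc, rfl⟩ := ih p' (by rwa [add_comm e p'] at hp)
      exact ⟨y + a, Set.add_mem_add hy ha, c, hc, add_right_cancel (b := e) (by rw [← hsum]; abel)⟩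
    · obtain ⟨c, rfl⟩ := exists_add_of_le hea
      exact ⟨p, hp, c, by rwa [add_comm e c] at ha,
        add_right_cancel (b := e) (by rw [← hsum]; abel)⟩

end Nfold

theorem Finsupp.single_one_le_add {ι : Type*} {i : ι} {u v : ι →₀ ℕ}
    (h : single i 1 ≤ u + v) : single i 1 ≤ u ∨ single i 1 ≤ v := by
  simp only [Finsupp.single_le_iff, Finsupp.add_apply] at h ⊢
  omega

theorem statement5_general (I : Set ℕ) (S : AddSubmonoid (↥I →₀ ℕ))
    (hS : IsGapAbsorbing S) (n : ℕ) (hn : 1 < n) :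
    ∀ s ∈ nfold n (Atoms S), ∀ i : ↥I, ∀ x : ↥I →₀ ℕ,
      x + Finsupp.single i 1 = s →
      x ∈ nfold (n - 1) (Atoms S) ∪ nfold n (Atoms S) := by
  obtain ⟨m, rfl⟩ : ∃ m, n = m + 2 := ⟨n - 2, by omega⟩
  rintro s hs i x rfl
  obtain ⟨y, ⟨z, hz, a, ha, rfl⟩, c, hc, rfl⟩ :=
    exists_eq_add_of_add_mem_nfold_succ (fun _ _ => Finsupp.single_one_le_add) (m + 1) x hs
  rw [add_assoc, add_comm a c]
  rcases add_mem_atoms_union_of_add_mem_atoms hS.2 hc ha with hca | ⟨a₁, ha₁, a₂, ha₂, hsum⟩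
  · exact Or.inl (Set.add_mem_add hz hca)
  · rw [← hsum, ← add_assoc]
    exact Or.inr (Set.add_mem_add (Set.add_mem_add hz ha₁) ha₂)

theorem statement5 (I : Set ℕ) (hI : I.Nonempty) (S : AddSubmonoid (↥I →₀ ℕ))
    (hS : IsGapAbsorbing S) (n : ℕ) (hn : 1 < n) :
    ∀ s ∈ nfold n (Atoms S), ∀ i : ↥I, ∀ x : ↥I →₀ ℕ,
      x + Finsupp.single i 1 = s →
      x ∈ nfold (n - 1) (Atoms S) ∪ nfold n (Atoms S) :=
  statement5_general I S hS n hn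
end

section
/- Let I be a nonempty set of non-negative integers and let S be a submonoid of ℕ^(I). The following are equivalent: (1) S is a gap absorbing monoid; (2) S is an ideal extension of ℕ^(I) and for every positive integer n, the set nA(S) \ (⋃_{i=0}^{n−1} iA(S)) is closed under intervals; (3) S is an ideal extension of ℕ^(I) and A(S) + A(S) is closed under intervals. -/
open Pointwise

/-!
Every `x ≤ a + b` splits as `x = p + q` with `p ≤ a` and `q ≤ b`. In a gap absorbing monoid this
pushes factorizations downwards: an element of `S` below a sum of `n` atoms is a sum of at most `n`
atoms, so the elements of minimal factorization length `n` form an interval-closed set.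
Conversely, in an ideal extension every element of `S*` lies above an atom and every gap below one
(a minimal element of `S*` above it). Hence a sum of two gaps, or of a gap and an atom, that lies
in `S*` and is not an atom lies between two sums of two atoms, and interval closure of
`A(S) + A(S)` puts it in `A(S) + A(S)`.
-/

section Monoid

variable {M : Type*} [AddCommMonoid M] {S : AddSubmonoid M}

theorem atoms_subset_sstar : Atoms S ⊆ Sstar S := Set.sdiff_subset

theorem nfold_eq_nsmul (n : ℕ) (X : Set M) : nfold n X = n • X := by
  induction n with
  | zero => rfl
  | succ n ih => rw [succ_nsmul, ← ih]; rfl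

theorem nfold_add (m n : ℕ) (X : Set M) : nfold (m + n) X = nfold m X + nfold n X := by
  simp only [nfold_eq_nsmul, add_nsmul]

theorem nfold_one (X : Set M) : nfold 1 X = X := by
  rw [nfold_eq_nsmul, one_nsmul]

theorem nfold_two (X : Set M) : nfold 2 X = X + X := by
  rw [nfold_eq_nsmul, two_nsmul]

theorem nfold_atoms_subset : ∀ n : ℕ, nfold n (Atoms S) ⊆ S
  | 0, _, rfl => S.zero_mem
  | n + 1, _, ⟨x, hx, a, ha, rfl⟩ => S.add_mem (nfold_atoms_subset n hx) ha.1.1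

theorem exists_le_two_mem_nfold {x : M} (hx : x ∈ Atoms S ∪ (Atoms S + Atoms S)) :
    ∃ j ≤ 2, x ∈ nfold j (Atoms S) := by
  rcases hx with hx | hx
  · exact ⟨1, by norm_num, by rwa [nfold_one]⟩
  · exact ⟨2, le_rfl, by rwa [nfold_two]⟩

theorem IsGapAbsorbing.exists_mem_nfold_gap_add_atom (hG : IsGapAbsorbing S) {g a : M}
    (hg : g ∈ Gaps S) (ha : a ∈ Atoms S) : ∃ j ≤ 2, g + a ∈ nfold j (Atoms S) :=
  exists_le_two_mem_nfold (hG.2 ⟨g, hg, a, ha, rfl⟩)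

theorem IsGapAbsorbing.gap_add_gap (hG : IsGapAbsorbing S) {g h : M}
    (hg : g ∈ Gaps S) (hh : h ∈ Gaps S) :
    g + h ∈ Gaps S ∨ ∃ j ≤ 2, g + h ∈ nfold j (Atoms S) := by
  rcases hG.1 ⟨g, hg, h, hh, rfl⟩ with (hgh | hgh) | hgh
  · exact Or.inl hgh
  · exact Or.inr (exists_le_two_mem_nfold (Or.inl hgh))
  · exact Or.inr (exists_le_two_mem_nfold (Or.inr hgh))

end Monoid

section Canonical

variable {M : Type*} [AddCommMonoid M] [PartialOrder M] [CanonicallyOrderedAdd M]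
  {S : AddSubmonoid M}

theorem add_mem_sstar_s6 {a b : M} (ha : a ∈ Sstar S) (hb : b ∈ S) : a + b ∈ Sstar S :=
  ⟨S.add_mem ha.1 hb, fun h => ha.2 (add_eq_zero.1 h).1⟩

theorem atoms_add_atoms_subset_sstar : Atoms S + Atoms S ⊆ Sstar S := by
  rintro _ ⟨a, ha, b, hb, rfl⟩
  exact add_mem_sstar_s6 ha.1 hb.1.1

theorem nfold_atoms_subset_sstar : ∀ {n : ℕ}, n ≠ 0 → nfold n (Atoms S) ⊆ Sstar S
  | n + 1, _, _, hmem => by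
    obtain ⟨x, hx, a, ha, rfl⟩ := Set.mem_add.1 hmem
    rw [add_comm]
    exact add_mem_sstar_s6 ha.1 (nfold_atoms_subset n hx)

theorem nfold_two_diff_eq (S : AddSubmonoid M) :
    nfold 2 (Atoms S) \ ⋃ i ∈ Finset.range 2, nfold i (Atoms S) = Atoms S + Atoms S := by
  rw [nfold_two, sdiff_eq_left, Set.disjoint_left]
  intro x hx hx'
  obtain ⟨i, hi, hxi⟩ : ∃ i < 2, x ∈ nfold i (Atoms S) := by simpa using hx'
  interval_cases i
  · exact (atoms_add_atoms_subset_sstar hx).2 hxi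
  · rw [nfold_one] at hxi
    exact hxi.2 (Set.add_subset_add atoms_subset_sstar atoms_subset_sstar hx)

theorem IsIdealExtension.mem_sstar_of_le (hS : IsIdealExtension S) {s x : M}
    (hs : s ∈ Sstar S) (h : s ≤ x) : x ∈ Sstar S := by
  obtain ⟨d, rfl⟩ := exists_add_of_le h
  exact hS s hs d

theorem IsIdealExtension.mem_atoms_of_le (hS : IsIdealExtension S) {s a : M}
    (hs : s ∈ Sstar S) (ha : a ∈ Atoms S) (h : s ≤ a) : s ∈ Atoms S := by
  refine ⟨hs, ?_⟩
  rintro ⟨p, hp, q, hq, rfl⟩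
  obtain ⟨d, rfl⟩ := exists_add_of_le h
  exact ha.2 ⟨p, hp, q + d, hS q hq d, (add_assoc p q d).symm⟩

theorem IsIdealExtension.eq_zero_or_mem_atoms_or_mem_gaps_of_le (hS : IsIdealExtension S)
    {q a : M} (ha : a ∈ Atoms S) (hqa : q ≤ a) : q = 0 ∨ q ∈ Atoms S ∨ q ∈ Gaps S := by
  by_cases hqS : q ∈ S
  · by_cases hq0 : q = 0
    · exact Or.inl hq0
    · exact Or.inr (Or.inl (hS.mem_atoms_of_le ⟨hqS, hq0⟩ ha hqa))
  · exact Or.inr (Or.inr hqS)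

theorem IsGapAbsorbing.atom_add_mem_sstar (hG : IsGapAbsorbing S) {a : M} (ha : a ∈ Atoms S)
    (x : M) : a + x ∈ Sstar S := by
  by_cases hx : x ∈ S
  · exact add_mem_sstar_s6 ha.1 hx
  · rw [add_comm]
    rcases hG.2 ⟨x, hx, a, ha, rfl⟩ with h | h
    · exact h.1
    · exact atoms_add_atoms_subset_sstar h

end Canonical

section Riesz

variable {M : Type*} [AddCommMonoid M] [PartialOrder M] [CanonicallyOrderedAdd M]
  [Sub M] [OrderedSub M]

theorem exists_add_eq_of_le_add {x a b : M} (h : x ≤ a + b) : ∃ p ≤ a, ∃ q ≤ b, p + q = x :=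
  ⟨x - (x - a), tsub_tsub_le, x - a, tsub_le_iff_left.2 h, tsub_add_cancel_of_le tsub_le_self⟩

end Riesz

section WellFounded

variable {M : Type*} [AddCommMonoid M] [PartialOrder M] [CanonicallyOrderedAdd M]
  [IsOrderedCancelAddMonoid M] [WellFoundedLT M] {S : AddSubmonoid M}

/-- A minimal element of `S*` below `s` is an atom. -/
theorem exists_atom_le {s : M} (hs : s ∈ Sstar S) : ∃ a ∈ Atoms S, a ≤ s := by
  obtain ⟨t, ⟨ht, hts⟩, hmin⟩ :=
    wellFounded_lt.has_min {t | t ∈ Sstar S ∧ t ≤ s} ⟨s, hs, le_rfl⟩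
  refine ⟨t, ⟨ht, ?_⟩, hts⟩
  rintro ⟨p, hp, q, hq, rfl⟩
  exact hmin p ⟨hp, le_self_add.trans hts⟩ (lt_add_of_pos_right p (pos_iff_ne_zero.2 hq.2))

theorem IsGapAbsorbing.isIdealExtension (hG : IsGapAbsorbing S) : IsIdealExtension S := by
  intro s hs x
  obtain ⟨a, ha, has⟩ := exists_atom_le hs
  obtain ⟨d, rfl⟩ := exists_add_of_le has
  rw [add_assoc]
  exact hG.atom_add_mem_sstar ha (d + x)

theorem mem_atoms_union_of_le (hC : ClosedUnderIntervals (Atoms S + Atoms S)) {w v : M}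
    (hw : w ∈ Sstar S) (hv : v ∈ Atoms S + Atoms S) (hwv : w ≤ v) :
    w ∈ Atoms S ∪ (Atoms S + Atoms S) := by
  by_cases hwA : w ∈ Atoms S
  · exact Or.inl hwA
  obtain ⟨s₁, hs₁, s₂, hs₂, rfl⟩ : w ∈ Sstar S + Sstar S := by
    by_contra h
    exact hwA ⟨hw, h⟩
  obtain ⟨b₁, hb₁, hbs₁⟩ := exists_atom_le hs₁
  obtain ⟨b₂, hb₂, hbs₂⟩ := exists_atom_le hs₂
  have hb : b₁ + b₂ ≤ s₁ + s₂ := add_le_add hbs₁ hbs₂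
  exact Or.inr (hC _ ⟨b₁, hb₁, b₂, hb₂, rfl⟩ v hv (hb.trans hwv) ⟨hb, hwv⟩)

end WellFounded

section Main

variable {M : Type*} [AddCommMonoid M] [PartialOrder M] [CanonicallyOrderedAdd M]
  [IsOrderedCancelAddMonoid M] [WellFoundedLT M] [Sub M] [OrderedSub M] {S : AddSubmonoid M}

/-- A minimal element `t` of `S*` above the gap `g` is an atom: if `t = s₁ + s₂` and
`g = g₁ + g₂` with `g₁ ≤ s₁`, `g₂ ≤ s₂`, then `g₁ < s₁` (otherwise `g ∈ S`), and
`g₁ + s₂ ∈ S*` lies strictly between `g` and `t`. -/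
theorem IsIdealExtension.exists_atom_ge (hS : IsIdealExtension S) {s g : M} (hs : s ∈ Sstar S)
    (hg : g ∈ Gaps S) : ∃ a ∈ Atoms S, g ≤ a := by
  obtain ⟨t, ⟨ht, hgt⟩, hmin⟩ :=
    wellFounded_lt.has_min {t | t ∈ Sstar S ∧ g ≤ t} ⟨s + g, hS s hs g, le_add_self⟩
  refine ⟨t, ⟨ht, ?_⟩, hgt⟩
  rintro ⟨s₁, hs₁, s₂, hs₂, rfl⟩
  obtain ⟨g₁, hg₁, g₂, hg₂, rfl⟩ := exists_add_eq_of_le_add hgt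
  have hlt : g₁ < s₁ := hg₁.lt_of_ne fun h => hg (hS.mem_sstar_of_le hs₁ (h ▸ le_self_add)).1
  exact hmin (g₁ + s₂) ⟨add_comm s₂ g₁ ▸ hS s₂ hs₂ g₁, add_le_add le_rfl hg₂⟩
    (add_lt_add_of_lt_of_le hlt le_rfl)

/-- Induction on `n`: split `x ≤ v + a` as `p + q` with `p ≤ v`, `q ≤ a`; when `q` is a gap,
gap absorption merges it with the last atom of `p`. -/
theorem IsGapAbsorbing.mem_gaps_or_exists_mem_nfold_of_le (hG : IsGapAbsorbing S) :
    ∀ {n : ℕ} {v x : M}, v ∈ nfold n (Atoms S) → x ≤ v →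
      x ∈ Gaps S ∨ ∃ i ≤ n, x ∈ nfold i (Atoms S)
  | 0, _, _, rfl, hx => Or.inr ⟨0, le_rfl, nonpos_iff_eq_zero.1 hx⟩
  | n + 1, _, _, hmem, hx => by
    obtain ⟨v, hv, a, ha, rfl⟩ := Set.mem_add.1 hmem
    obtain ⟨p, hpv, q, hqa, rfl⟩ := exists_add_eq_of_le_add hx
    have hq := hG.isIdealExtension.eq_zero_or_mem_atoms_or_mem_gaps_of_le ha hqa
    rcases hG.mem_gaps_or_exists_mem_nfold_of_le hv hpv with hp | ⟨i, hi, hpi⟩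
    · have hn : n ≠ 0 := by
        rintro rfl
        obtain rfl : v = 0 := hv
        exact hp (nonpos_iff_eq_zero.1 hpv ▸ S.zero_mem)
      rcases hq with rfl | hq | hq
      · exact Or.inl (by simpa using hp)
      · obtain ⟨j, hj, hpq⟩ := hG.exists_mem_nfold_gap_add_atom hp hq
        exact Or.inr ⟨j, by omega, hpq⟩
      · exact (hG.gap_add_gap hp hq).imp_right fun ⟨j, hj, hpq⟩ => ⟨j, by omega, hpq⟩
    · rcases hq with rfl | hq | hq
      · exact Or.inr ⟨i, by omega, by simpa using hpi⟩
      · exact Or.inr ⟨i + 1, by omega, p, hpi, q, hq, rfl⟩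
      cases i with
      | zero => exact Or.inl (by rwa [show p = 0 from hpi, zero_add])
      | succ k =>
        obtain ⟨w, hw, c, hc, rfl⟩ := Set.mem_add.1 hpi
        obtain ⟨j, hj, hqc⟩ := hG.exists_mem_nfold_gap_add_atom hq hc
        refine Or.inr ⟨k + j, by omega, ?_⟩
        rw [add_assoc, add_comm c q, nfold_add]
        exact Set.add_mem_add hw hqc

theorem IsGapAbsorbing.closedUnderIntervals_nfold_diff (hG : IsGapAbsorbing S) {n : ℕ}
    (hn : 0 < n) :
    ClosedUnderIntervals (nfold n (Atoms S) \ ⋃ i ∈ Finset.range n, nfold i (Atoms S)) := by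
  rintro u ⟨hu, hu'⟩ v ⟨hv, -⟩ - x ⟨hux, hxv⟩
  simp only [Set.mem_iUnion, Finset.mem_range, not_exists] at hu'
  have hlen : ∀ i, x ∈ nfold i (Atoms S) → n ≤ i := by
    intro i hxi
    obtain hug | ⟨j, hj, huj⟩ := hG.mem_gaps_or_exists_mem_nfold_of_le hxi hux
    · exact absurd (nfold_atoms_subset n hu) hug
    · by_contra! hi
      exact hu' j (by omega) huj
  have hxS : x ∈ S :=
    (hG.isIdealExtension.mem_sstar_of_le (nfold_atoms_subset_sstar hn.ne' hu) hux).1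
  obtain hxg | ⟨i, hi, hxi⟩ := hG.mem_gaps_or_exists_mem_nfold_of_le hv hxv
  · exact absurd hxS hxg
  refine ⟨le_antisymm hi (hlen i hxi) ▸ hxi, ?_⟩
  simp only [Set.mem_iUnion, Finset.mem_range, not_exists]
  exact fun j hj hxj => (hlen j hxj).not_gt hj

theorem isGapAbsorbing_of_closedUnderIntervals (hS : IsIdealExtension S)
    (hC : ClosedUnderIntervals (Atoms S + Atoms S)) : IsGapAbsorbing S := by
  constructor
  · rintro _ ⟨g, hg, h, hh, rfl⟩
    by_cases hgh : g + h ∈ S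
    · have hne : g + h ≠ 0 := fun h0 => hg ((add_eq_zero.1 h0).1 ▸ S.zero_mem)
      obtain ⟨a₁, ha₁, hga₁⟩ := hS.exists_atom_ge ⟨hgh, hne⟩ hg
      obtain ⟨a₂, ha₂, hha₂⟩ := hS.exists_atom_ge ⟨hgh, hne⟩ hh
      rw [Set.union_assoc]
      exact Or.inr (mem_atoms_union_of_le hC ⟨hgh, hne⟩ ⟨a₁, ha₁, a₂, ha₂, rfl⟩
        (add_le_add hga₁ hha₂))
    · exact Or.inl (Or.inl hgh)
  · rintro _ ⟨g, hg, a, ha, rfl⟩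
    have hga : g + a ∈ Sstar S := add_comm a g ▸ hS a ha.1 g
    obtain ⟨a₁, ha₁, hga₁⟩ := hS.exists_atom_ge hga hg
    exact mem_atoms_union_of_le hC hga ⟨a₁, ha₁, a, ha, rfl⟩ (add_le_add hga₁ le_rfl)

end Main

theorem statement6_general (I : Set ℕ) (S : AddSubmonoid (↥I →₀ ℕ)) :
    List.TFAE
      [IsGapAbsorbing S,
       IsIdealExtension S ∧ ∀ n : ℕ, 0 < n →
         ClosedUnderIntervals
           (nfold n (Atoms S) \ ⋃ i ∈ Finset.range n, nfold i (Atoms S)),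
       IsIdealExtension S ∧ ClosedUnderIntervals (Atoms S + Atoms S)] := by
  tfae_have 1 → 2 := fun hG =>
    ⟨hG.isIdealExtension, fun _ => hG.closedUnderIntervals_nfold_diff⟩
  tfae_have 2 → 3 := fun ⟨hS, hC⟩ => ⟨hS, nfold_two_diff_eq S ▸ hC 2 two_pos⟩
  tfae_have 3 → 1 := fun ⟨hS, hC⟩ => isGapAbsorbing_of_closedUnderIntervals hS hC
  tfae_finish

theorem statement6 (I : Set ℕ) (hI : I.Nonempty) (S : AddSubmonoid (↥I →₀ ℕ)) :
    List.TFAE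
      [IsGapAbsorbing S,
       IsIdealExtension S ∧ ∀ n : ℕ, 0 < n →
         ClosedUnderIntervals
           (nfold n (Atoms S) \ ⋃ i ∈ Finset.range n, nfold i (Atoms S)),
       IsIdealExtension S ∧ ClosedUnderIntervals (Atoms S + Atoms S)] :=
  statement6_general I S
end

section
/- Let I be a nonempty set of non-negative integers, let S be a submonoid of ℕ^(I), and let s ∈ S. If ℓ(s) = 2 and s has at least two distinct factorizations into atoms, then s is a Betti element of S. -/
open Pointwise

section Factorizations

variable {M : Type*} [AddCommMonoid M] [PartialOrder M]

/-- The element represented by a factorization, i.e. a finitely supported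
function from the atoms to `ℕ`. -/
noncomputable def factSum (S : AddSubmonoid M) (z : ↥(Atoms S) →₀ ℕ) : M :=
  z.sum fun a n => n • (a : M)

/-- The set of factorizations of `s` into atoms of `S`. -/
noncomputable def Zset (S : AddSubmonoid M) (s : M) : Set (↥(Atoms S) →₀ ℕ) :=
  {z | factSum S z = s}

end Factorizations

section Betti

variable {M : Type*} [AddCommMonoid M] [PartialOrder M]

/-- The graph `G_s`: vertices are atoms `a` with `a ≤_S s`, and `a`, `b` are
adjacent whenever `s - a - b ∈ S`. -/
def BettiGraph (S : AddSubmonoid M) (s : M) :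
    SimpleGraph {a : M // a ∈ Atoms S ∧ dvdS S a s} where
  Adj a b := a ≠ b ∧ ∃ t ∈ S, (a : M) + (b : M) + t = s
  symm := by
    constructor
    rintro a b ⟨hne, t, htS, ht⟩
    refine ⟨hne.symm, t, htS, ?_⟩
    rw [add_comm (b : M) (a : M)]
    exact ht
  loopless := by
    constructor
    rintro a ⟨hne, -⟩
    exact hne rfl

/-- `s` is a Betti element of `S` if the graph `G_s` is not connected. -/
def IsBetti (S : AddSubmonoid M) (s : M) : Prop := ¬ (BettiGraph S s).Connected

end Betti

/-!
Write `s = a + b` with atoms `a`, `b` (possible since `ℓ(s) = 2`). If `w` is adjacent to `a` in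
`G_s`, then `b - w ∈ S`, and as `b` is an atom this forces `w = b`; symmetrically for `b`. So if
`G_s` were connected its only vertices would be `a` and `b`. Every factorization of `s` contains
an atom dividing `s`, i.e. `a` or `b`, and what remains is a factorization of the other atom, which
is unique; hence `s` would have a single factorization.
-/

lemma SimpleGraph.Reachable.of_adj_imp {V : Type*} {G : SimpleGraph V} {P : V → Prop}
    (hP : ∀ v w, G.Adj v w → P v → P w) {u v : V} (h : G.Reachable u v) (hu : P u) : P v := by
  rw [reachable_iff_reflTransGen] at h
  induction h with
  | refl => exact hu
  | tail _ hadj ih => exact hP _ _ hadj ih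

lemma Finsupp.exists_eq_single_one_add_of_ne_zero {α : Type*} {u : α →₀ ℕ} (hu : u ≠ 0) :
    ∃ c u', u = single c 1 + u' := by
  obtain ⟨c, hc⟩ := Finsupp.support_nonempty_iff.mpr hu
  exact ⟨c, exists_add_of_le <| single_le_iff.mpr <|
    Nat.one_le_iff_ne_zero.mpr (mem_support_iff.mp hc)⟩

section

variable {M : Type*} [AddCommMonoid M] {S : AddSubmonoid M}

@[simp]
lemma factSum_zero : factSum S 0 = 0 :=
  Finsupp.sum_zero_index

@[simp]
lemma factSum_single (c : Atoms S) (n : ℕ) : factSum S (Finsupp.single c n) = n • (c : M) :=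
  Finsupp.sum_single_index (zero_smul ℕ _)

lemma factSum_add (x y : Atoms S →₀ ℕ) : factSum S (x + y) = factSum S x + factSum S y :=
  Finsupp.sum_add_index' (fun _ => zero_smul ℕ _) fun a => (add_smul · · (a : M))

lemma factSum_single_one_add (c : Atoms S) (u : Atoms S →₀ ℕ) :
    factSum S (Finsupp.single c 1 + u) = c + factSum S u := by
  rw [factSum_add, factSum_single, one_smul]

lemma factSum_mem (u : Atoms S →₀ ℕ) : factSum S u ∈ S :=
  sum_mem fun c _ => nsmul_mem c.2.1.1 _

lemma mem_nfold_two {X : Set M} {s : M} : s ∈ nfold 2 X ↔ ∃ a ∈ X, ∃ b ∈ X, a + b = s := by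
  simp [nfold, Set.mem_add]

lemma exists_add_eq_of_minLen_eq_two {s : M} (hl : minLen S s = 2) :
    ∃ a ∈ Atoms S, ∃ b ∈ Atoms S, a + b = s := by
  have hne : (Lset S s).Nonempty := Set.nonempty_iff_ne_empty.mpr fun h => by
    simp [minLen, h] at hl
  exact mem_nfold_two.mp (hl ▸ Nat.sInf_mem hne : 2 ∈ Lset S s)

lemma eq_zero_of_add_eq_mem_atoms {b w t : M} (hb : b ∈ Atoms S) (hw : w ∈ Sstar S) (ht : t ∈ S)
    (h : w + t = b) : t = 0 :=
  by_contra fun ht0 => hb.2 ⟨w, hw, t, ⟨ht, ht0⟩, h⟩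

section Reduced

variable [Subsingleton (AddUnits M)]

lemma factSum_eq_zero_iff {u : Atoms S →₀ ℕ} : factSum S u = 0 ↔ u = 0 := by
  refine ⟨fun h => by_contra fun hu => ?_, fun h => h ▸ factSum_zero⟩
  obtain ⟨c, u', rfl⟩ := Finsupp.exists_eq_single_one_add_of_ne_zero hu
  rw [factSum_single_one_add] at h
  exact c.2.1.2 (add_eq_zero.mp h).1

lemma eq_single_of_factSum_eq_mem_atoms {b : M} (hb : b ∈ Atoms S) {u : Atoms S →₀ ℕ}
    (hu : factSum S u = b) : u = Finsupp.single ⟨b, hb⟩ 1 := by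
  have hu0 : u ≠ 0 := by
    rintro rfl
    exact hb.1.2 (factSum_zero.symm.trans hu).symm
  obtain ⟨c, u', rfl⟩ := Finsupp.exists_eq_single_one_add_of_ne_zero hu0
  rw [factSum_single_one_add] at hu
  have hu' : factSum S u' = 0 := eq_zero_of_add_eq_mem_atoms hb c.2.1 (factSum_mem u') hu
  rw [hu', add_zero] at hu
  rw [factSum_eq_zero_iff.mp hu', add_zero, (Subtype.ext hu : c = ⟨b, hb⟩)]

end Reduced

section Cancel

variable [IsLeftCancelAdd M]

lemma eq_of_add_add_eq_add {x y w t : M} (hy : y ∈ Atoms S) (hw : w ∈ Sstar S) (ht : t ∈ S)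
    (h : x + w + t = x + y) : w = y := by
  have hwt : w + t = y := add_left_cancel (by rwa [← add_assoc])
  rwa [eq_zero_of_add_eq_mem_atoms hy hw ht hwt, add_zero] at hwt

variable {a b : M}

lemma BettiGraph.eq_or_eq_of_adj (ha : a ∈ Atoms S) (hb : b ∈ Atoms S)
    {v w : {x // x ∈ Atoms S ∧ dvdS S x (a + b)}} (hadj : (BettiGraph S (a + b)).Adj v w)
    (hv : (v : M) = a ∨ (v : M) = b) : (w : M) = a ∨ (w : M) = b := by
  obtain ⟨-, t, ht, h⟩ := hadj
  rcases hv with hv | hv <;> rw [hv] at h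
  · exact .inr (eq_of_add_add_eq_add hb w.2.1.1 ht h)
  · exact .inl (eq_of_add_add_eq_add ha w.2.1.1 ht (h.trans (add_comm a b)))

lemma BettiGraph.eq_or_eq_of_connected (ha : a ∈ Atoms S) (hb : b ∈ Atoms S)
    (hconn : (BettiGraph S (a + b)).Connected) (v : {x // x ∈ Atoms S ∧ dvdS S x (a + b)}) :
    (v : M) = a ∨ (v : M) = b :=
  (hconn.preconnected ⟨a, ha, b, hb.1.1, rfl⟩ v).of_adj_imp
    (fun _ _ => BettiGraph.eq_or_eq_of_adj ha hb) (.inl rfl)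

variable [Subsingleton (AddUnits M)]

lemma Zset_subsingleton_of_connected (ha : a ∈ Atoms S) (hb : b ∈ Atoms S)
    (hconn : (BettiGraph S (a + b)).Connected) : (Zset S (a + b)).Subsingleton := by
  suffices ∀ u ∈ Zset S (a + b), u = .single ⟨a, ha⟩ 1 + .single ⟨b, hb⟩ 1 from
    fun u hu u' hu' => (this u hu).trans (this u' hu').symm
  intro u hu
  have hu0 : u ≠ 0 := by
    rintro rfl
    exact ha.1.2 (add_eq_zero.mp (factSum_zero.symm.trans hu).symm).1
  obtain ⟨c, u', rfl⟩ := Finsupp.exists_eq_single_one_add_of_ne_zero hu0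
  have hc : c + factSum S u' = a + b := (factSum_single_one_add c u').symm.trans hu
  rcases BettiGraph.eq_or_eq_of_connected ha hb hconn ⟨c, c.2, _, factSum_mem u', hc⟩ with
    hca | hcb
  · rw [hca] at hc
    rw [eq_single_of_factSum_eq_mem_atoms hb (add_left_cancel hc), (Subtype.ext hca : c = ⟨a, ha⟩)]
  · rw [hcb, add_comm a b] at hc
    rw [eq_single_of_factSum_eq_mem_atoms ha (add_left_cancel hc), (Subtype.ext hcb : c = ⟨b, hb⟩),
      add_comm]

theorem isBetti_of_minLen_eq_two {s : M} (hl : minLen S s = 2)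
    (hZ : ∃ z ∈ Zset S s, ∃ w ∈ Zset S s, z ≠ w) : IsBetti S s := by
  obtain ⟨a, ha, b, hb, rfl⟩ := exists_add_eq_of_minLen_eq_two hl
  obtain ⟨z, hz, w, hw, hzw⟩ := hZ
  exact fun hconn => hzw (Zset_subsingleton_of_connected ha hb hconn hz hw)

end Cancel

end

theorem statement10_general (I : Set ℕ) (S : AddSubmonoid (↥I →₀ ℕ))
    (s : ↥I →₀ ℕ) (hl : minLen S s = 2)
    (hZ : ∃ z ∈ Zset S s, ∃ w ∈ Zset S s, z ≠ w) :
    IsBetti S s :=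
  isBetti_of_minLen_eq_two hl hZ

theorem statement10 (I : Set ℕ) (hI : I.Nonempty) (S : AddSubmonoid (↥I →₀ ℕ))
    (s : ↥I →₀ ℕ) (hs : s ∈ S) (hl : minLen S s = 2)
    (hZ : ∃ z ∈ Zset S s, ∃ w ∈ Zset S s, z ≠ w) :
    IsBetti S s :=
  statement10_general I S s hl hZ
end

section
/- Let I be a nonempty set of non-negative integers and let S be an ideal extension of ℕ^(I). Then for every atom a ∈ A(S), the ω-primality satisfies ω(a) ≤ ‖a‖₁ + 1. In particular, ω(S) ≤ 1 + sup{‖a‖₁ : a ∈ A(S)}. -/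
open Pointwise

/-- The 1-norm `‖a‖₁ = Σ_i a i`. -/
def norm1 {α : Type*} (a : α →₀ ℕ) : ℕ := a.sum fun _ n => n

section Omega

variable {M : Type*} [AddCommMonoid M] [PartialOrder M]

/-- `N` is an ω-bound for `s`: whenever `s ≤_S s_1 + ⋯ + s_n` with all `s_i ∈ S`,
already `s ≤_S Σ_{j ∈ J} s_j` for some `J` with `|J| ≤ N`. -/
def omegaBound (S : AddSubmonoid M) (s : M) (N : ℕ) : Prop :=
  ∀ (n : ℕ) (f : Fin n → M), (∀ i, f i ∈ S) → dvdS S s (∑ i, f i) →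
    ∃ J : Finset (Fin n), J.card ≤ N ∧ dvdS S s (∑ i ∈ J, f i)

/-- The ω-primality `ω(s) ∈ ℕ ∪ {∞}` of `s`. -/
noncomputable def omegaVal (S : AddSubmonoid M) (s : M) : ℕ∞ :=
  sInf {N : ℕ∞ | ∃ k : ℕ, N = (k : ℕ∞) ∧ omegaBound S s k}

/-- The ω-primality of the monoid: `ω(S) = sup {ω(a) : a ∈ A(S)}`. -/
noncomputable def omegaMonoid (S : AddSubmonoid M) : ℕ∞ :=
  ⨆ a ∈ Atoms S, omegaVal S a

end Omega


/-! If `a ≤_S s_1 + ⋯ + s_n` then `a ≤ Σ s_j` coordinatewise, and for each coordinate `c` at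
most `a c` of the summands already reach `a c`; so at most `‖a‖₁` summands give `a ≤ Σ_J s_j`.
If some other summand is nonzero, the ideal extension property turns the surplus plus that
summand into an element of `S`, so `‖a‖₁ + 1` summands suffice. -/

theorem Finset.exists_subset_card_le_le_sum {ι : Type*} [DecidableEq ι] (g : ι → ℕ)
    (U : Finset ι) (m : ℕ) (hm : m ≤ ∑ i ∈ U, g i) :
    ∃ T ⊆ U, T.card ≤ m ∧ m ≤ ∑ i ∈ T, g i := by
  induction m with
  | zero => exact ⟨∅, empty_subset U, by simp, by simp⟩
  | succ m ih =>
    obtain ⟨T, hTU, hTcard, hTsum⟩ := ih (by omega)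
    by_cases hreach : m + 1 ≤ ∑ i ∈ T, g i
    · exact ⟨T, hTU, by omega, hreach⟩
    obtain ⟨i, hiU, hiT, hgi⟩ : ∃ i ∈ U, i ∉ T ∧ g i ≠ 0 := by
      by_contra! h
      have := sum_subset hTU h
      omega
    refine ⟨insert i T, insert_subset hiU hTU, ?_, ?_⟩
    · rw [card_insert_of_notMem hiT]; omega
    · rw [sum_insert hiT]; omega

theorem Finsupp.exists_subset_card_le_norm1_le_sum {ι κ : Type*} [DecidableEq κ]
    (a : ι →₀ ℕ) (f : κ → ι →₀ ℕ) (U : Finset κ) (ha : a ≤ ∑ j ∈ U, f j) :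
    ∃ J ⊆ U, J.card ≤ norm1 a ∧ a ≤ ∑ j ∈ J, f j := by
  classical
  have hcover (c : ι) : ∃ T ⊆ U, T.card ≤ a c ∧ a c ≤ ∑ j ∈ T, f j c :=
    Finset.exists_subset_card_le_le_sum (f · c) U (a c)
      (by simpa only [Finsupp.finsetSum_apply] using ha c)
  choose T hTU hTcard hTsum using hcover
  refine ⟨a.support.biUnion T, Finset.biUnion_subset.mpr fun c _ => hTU c, ?_, ?_⟩
  · calc (a.support.biUnion T).card ≤ ∑ c ∈ a.support, (T c).card := Finset.card_biUnion_le
      _ ≤ ∑ c ∈ a.support, a c := Finset.sum_le_sum fun c _ => hTcard c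
      _ = norm1 a := rfl
  · intro c
    rw [Finsupp.finsetSum_apply]
    by_cases hc : c ∈ a.support
    · exact (hTsum c).trans
        (Finset.sum_le_sum_of_subset (Finset.subset_biUnion_of_mem T hc))
    · simp [Finsupp.notMem_support_iff.mp hc]

theorem dvdS.le {M : Type*} [AddCommMonoid M] [PartialOrder M] [CanonicallyOrderedAdd M]
    {S : AddSubmonoid M} {a b : M} (h : dvdS S a b) : a ≤ b := by
  obtain ⟨t, -, rfl⟩ := h
  exact le_self_add

theorem IsIdealExtension.dvdS_add_of_le {M : Type*} [AddCommMonoid M] [PartialOrder M]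
    [ExistsAddOfLE M] {S : AddSubmonoid M} (hS : IsIdealExtension S) {s a b : M}
    (hs : s ∈ Sstar S) (hab : a ≤ b) : dvdS S a (b + s) := by
  obtain ⟨c, rfl⟩ := exists_add_of_le hab
  exact ⟨s + c, (hS s hs c).1, by abel⟩

theorem omegaVal_le_of_omegaBound {M : Type*} [AddCommMonoid M] {S : AddSubmonoid M} {s : M}
    {k : ℕ} (h : omegaBound S s k) : omegaVal S s ≤ k :=
  sInf_le ⟨k, rfl, h⟩

theorem IsIdealExtension.omegaBound_norm1_add_one {ι : Type*} {S : AddSubmonoid (ι →₀ ℕ)}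
    (hS : IsIdealExtension S) (a : ι →₀ ℕ) : omegaBound S a (norm1 a + 1) := by
  classical
  intro n f hf hdvd
  obtain ⟨J, -, hJcard, hJ⟩ :=
    Finsupp.exists_subset_card_le_norm1_le_sum a f Finset.univ hdvd.le
  by_cases hrest : ∀ j ∉ J, f j = 0
  · refine ⟨J, by omega, ?_⟩
    rwa [Finset.sum_subset (Finset.subset_univ J) fun j _ hj => hrest j hj]
  · obtain ⟨j, hjJ, hfj⟩ : ∃ j ∉ J, f j ≠ 0 := by simpa using hrest
    refine ⟨insert j J, by rw [Finset.card_insert_of_notMem hjJ]; omega, ?_⟩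
    rw [Finset.sum_insert hjJ, add_comm]
    exact hS.dvdS_add_of_le ⟨hf j, hfj⟩ hJ

theorem statement16_general (I : Set ℕ) (S : AddSubmonoid (↥I →₀ ℕ))
    (hS : IsIdealExtension S) :
    (∀ a ∈ Atoms S, omegaVal S a ≤ (norm1 a : ℕ∞) + 1) ∧
    omegaMonoid S ≤ 1 + ⨆ a ∈ Atoms S, (norm1 a : ℕ∞) := by
  have hatom (a) : omegaVal S a ≤ (norm1 a : ℕ∞) + 1 := by
    exact_mod_cast omegaVal_le_of_omegaBound (hS.omegaBound_norm1_add_one a)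
  refine ⟨fun a _ => hatom a, iSup₂_le fun a ha => ?_⟩
  calc omegaVal S a ≤ 1 + (norm1 a : ℕ∞) := add_comm (norm1 a : ℕ∞) 1 ▸ hatom a
    _ ≤ 1 + ⨆ a ∈ Atoms S, (norm1 a : ℕ∞) :=
      add_le_add_right (le_iSup₂ (f := fun a _ => (norm1 a : ℕ∞)) a ha) 1

theorem statement16 (I : Set ℕ) (hI : I.Nonempty) (S : AddSubmonoid (↥I →₀ ℕ))
    (hS : IsIdealExtension S) :
    (∀ a ∈ Atoms S, omegaVal S a ≤ (norm1 a : ℕ∞) + 1) ∧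
    omegaMonoid S ≤ 1 + ⨆ a ∈ Atoms S, (norm1 a : ℕ∞) :=
  statement16_general I S hS
end

section
/- Let I be a nonempty set of non-negative integers and let S be an ideal extension of ℕ^(I). Let a, b ∈ A(S) with a ≤ b. Then ω(a) ≤ ω(b). -/
open Pointwise

/-!
Write `b = a + c`. Given `a ≤_S s₁ + ⋯ + sₙ`, add `c` to a nonzero summand `s_k`: since `S` is an
ideal extension, all summands stay in `S`, and now `b ≤_S` the new sum. An ω-bound `N` for `b`
gives `J` with `|J| ≤ N` and `b + u = Σ_J` of the new summands, `u ∈ S`. If `k ∈ J`, cancel `c`.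
Otherwise `a + (c + u) = Σ_J sⱼ`, and `c + u ∈ S` unless `u = 0` and `c ∉ S`. In that last case the
atom `b` is a single `sⱼ`, so `a ≤_S sⱼ + s_k`, and `|{j, k}| ≤ N` because `c ∉ S` forces `N ≥ 2`.
-/

open Finset

section

variable {M : Type*} [AddCommMonoid M] {S : AddSubmonoid M}

lemma mem_Sstar_iff {x : M} : x ∈ Sstar S ↔ x ∈ S ∧ x ≠ 0 := by
  simp [Sstar]

lemma IsIdealExtension.add_mem (hS : IsIdealExtension S) {s : M} (hs : s ∈ Sstar S) (x : M) :
    s + x ∈ S :=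
  (hS s hs x).1

lemma exists_eq_of_sum_eq_mem_Atoms {ι : Type*} {b : M} (hb : b ∈ Atoms S) {f : ι → M}
    (hf : ∀ i, f i ∈ S) {J : Finset ι} (hsum : ∑ i ∈ J, f i = b) : ∃ j ∈ J, f j = b := by
  classical
  obtain ⟨j, hj, hj0⟩ : ∃ j ∈ J, f j ≠ 0 := by
    by_contra! h
    exact (mem_Sstar_iff.mp hb.1).2 (by rw [← hsum, sum_eq_zero h])
  refine ⟨j, hj, ?_⟩
  have hsplit : f j + ∑ i ∈ J.erase j, f i = b := by rw [add_sum_erase _ _ hj, hsum]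
  by_contra hne
  have hrest : ∑ i ∈ J.erase j, f i ≠ 0 := fun h => hne (by rwa [h, add_zero] at hsplit)
  exact hb.2 ⟨f j, mem_Sstar_iff.mpr ⟨hf j, hj0⟩, _,
    mem_Sstar_iff.mpr ⟨sum_mem fun i _ => hf i, hrest⟩, hsplit⟩

variable [IsCancelAdd M] [Subsingleton (AddUnits M)]

lemma two_le_of_omegaBound (hS : IsIdealExtension S) {a c : M} (ha : a ∈ Sstar S)
    (hac : a + c ∈ S) (hc : c ∉ S) {N : ℕ} (hN : omegaBound S (a + c) N) : 2 ≤ N := by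
  obtain ⟨haS, ha0⟩ := mem_Sstar_iff.mp ha
  -- `a + c` divides `a + (a + 2c) = (a + c) + (a + c)`, but neither summand alone.
  let f : Fin 2 → M := ![a, a + (c + c)]
  have hf : ∀ i, f i ∈ S := by
    intro i
    fin_cases i
    exacts [haS, hS.add_mem ha _]
  have hdvd : dvdS S (a + c) (∑ i, f i) := ⟨a + c, hac, by
    simp only [Fin.sum_univ_two, f, Matrix.cons_val_zero, Matrix.cons_val_one]
    abel⟩
  obtain ⟨J, hJ, u, hu, hJsum⟩ := hN 2 f hf hdvd
  by_contra! hN1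
  obtain ⟨i, hJi⟩ := card_le_one_iff_subset_singleton.mp (hJ.trans (Nat.le_of_lt_succ hN1))
  rcases subset_singleton_iff.mp hJi with rfl | rfl
  · rw [sum_empty, add_assoc, add_eq_zero] at hJsum
    exact ha0 hJsum.1
  fin_cases i
  · have hcu : a + (c + u) = a + 0 := by simpa [f, add_assoc] using hJsum
    exact hc ((add_eq_zero.mp (add_left_cancel hcu)).1 ▸ S.zero_mem)
  · have hcu : a + c + u = a + c + c := by simpa [f, add_assoc] using hJsum
    exact hc (add_left_cancel hcu ▸ hu)

lemma omegaBound.of_add (hS : IsIdealExtension S) {a c : M} (ha : a ∈ Sstar S)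
    (hb : a + c ∈ Atoms S) {N : ℕ} (hN : omegaBound S (a + c) N) : omegaBound S a N := by
  classical
  rintro n f hf ⟨t, ht, hsum⟩
  obtain ⟨k, hk⟩ : ∃ k, f k ≠ 0 := by
    by_contra! h
    rw [sum_eq_zero fun i _ => h i, add_eq_zero] at hsum
    exact (mem_Sstar_iff.mp ha).2 hsum.1
  have hfk : f k ∈ Sstar S := mem_Sstar_iff.mpr ⟨hf k, hk⟩
  let g : Fin n → M := f + Pi.single k c
  have hg : ∀ i, g i ∈ S := by
    intro i
    by_cases hik : i = k
    · subst hik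
      simpa [g] using hS.add_mem hfk c
    · simpa [g, hik] using hf i
  have hgsum : ∀ J : Finset (Fin n), ∑ i ∈ J, g i = ∑ i ∈ J, f i + if k ∈ J then c else 0 := by
    intro J
    simp only [g, Pi.add_apply, sum_add_distrib, sum_pi_single']
  obtain ⟨J, hJ, u, hu, hJsum⟩ :=
    hN n g hg ⟨t, ht, by rw [hgsum, if_pos (mem_univ k), ← hsum]; abel⟩
  rw [hgsum] at hJsum
  by_cases hkJ : k ∈ J
  · rw [if_pos hkJ] at hJsum
    exact ⟨J, hJ, u, hu, add_right_cancel (b := c) (by rw [← hJsum]; abel)⟩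
  rw [if_neg hkJ, add_zero] at hJsum
  by_cases hcu : c + u ∈ S
  · exact ⟨J, hJ, c + u, hcu, by rw [← hJsum]; abel⟩
  have hu0 : u = 0 := by
    by_contra hu0
    exact hcu (add_comm u c ▸ hS.add_mem (mem_Sstar_iff.mpr ⟨hu, hu0⟩) c)
  have hc : c ∉ S := by simpa [hu0] using hcu
  rw [hu0, add_zero] at hJsum
  obtain ⟨j, hjJ, hj⟩ := exists_eq_of_sum_eq_mem_Atoms hb hf hJsum.symm
  have hjk : j ≠ k := fun h => hkJ (h ▸ hjJ)
  refine ⟨{j, k}, ?_, c + f k, add_comm (f k) c ▸ hS.add_mem hfk c, ?_⟩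
  · rw [card_pair hjk]
    exact two_le_of_omegaBound hS ha hb.1.1 hc hN
  · rw [sum_pair hjk, hj]
    abel

end

lemma omegaVal_le_omegaVal_of_le {M : Type*} [AddCommMonoid M] [PartialOrder M]
    [CanonicallyOrderedAdd M] [IsCancelAdd M] {S : AddSubmonoid M} (hS : IsIdealExtension S)
    {a b : M} (ha : a ∈ Atoms S) (hb : b ∈ Atoms S) (hab : a ≤ b) :
    omegaVal S a ≤ omegaVal S b := by
  obtain ⟨c, rfl⟩ := exists_add_of_le hab
  exact sInf_le_sInf fun _ ⟨k, hN, hk⟩ => ⟨k, hN, hk.of_add hS ha.1 hb⟩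

theorem statement17_general (I : Set ℕ) (S : AddSubmonoid (↥I →₀ ℕ))
    (hS : IsIdealExtension S) (a b : ↥I →₀ ℕ)
    (ha : a ∈ Atoms S) (hb : b ∈ Atoms S) (hab : a ≤ b) :
    omegaVal S a ≤ omegaVal S b :=
  omegaVal_le_omegaVal_of_le hS ha hb hab

theorem statement17 (I : Set ℕ) (hI : I.Nonempty) (S : AddSubmonoid (↥I →₀ ℕ))
    (hS : IsIdealExtension S) (a b : ↥I →₀ ℕ)
    (ha : a ∈ Atoms S) (hb : b ∈ Atoms S) (hab : a ≤ b) :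
    omegaVal S a ≤ omegaVal S b :=
  statement17_general I S hS a b ha hb hab
end
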